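/- Let R be a commutative ring with a distinguished invertible element q^{1/2} (write q = (q^{1/2})^2). Let Q be an antisymmetric r×r integer matrix, Q' an antisymmetric r'×r' integer matrix, and H an r×r' integer matrix such that H Q' Hᵀ = Q. Then the R-linear map T(Q) → T(Q') defined on the basis of normalized monomials by x^k ↦ x^{kH} (where kH ∈ ℤ^{r'} is the product of the row vector k with the matrix H) is an R-algebra homomorphism. -/

import Mathlib

open scoped BigOperators Matrix

/-- Defining relations of the quantum torus `T(Q)` over a commutative ring `R`
with distinguished invertible element `sqq = q^{1/2}` (so `q = sqq^2`):
generators `x_i = ι (Sum.inl i)` and their inverses `x_i⁻¹ = ι (Sum.inr i)`,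
relations `x_i x_i⁻¹ = x_i⁻¹ x_i = 1` and `x_i x_j = q^{Q i j} x_j x_i`. -/
inductive QTRel (R : Type) [CommRing R] (sqq : Rˣ) {r : ℕ} (Q : Matrix (Fin r) (Fin r) ℤ) :
    FreeAlgebra R (Fin r ⊕ Fin r) → FreeAlgebra R (Fin r ⊕ Fin r) → Prop
  | mul_inv (i : Fin r) :
      QTRel R sqq Q (FreeAlgebra.ι R (Sum.inl i) * FreeAlgebra.ι R (Sum.inr i)) 1
  | inv_mul (i : Fin r) :
      QTRel R sqq Q (FreeAlgebra.ι R (Sum.inr i) * FreeAlgebra.ι R (Sum.inl i)) 1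
  | qcomm (i j : Fin r) :
      QTRel R sqq Q (FreeAlgebra.ι R (Sum.inl i) * FreeAlgebra.ι R (Sum.inl j))
        (((sqq ^ (2 * Q i j) : Rˣ) : R) •
          (FreeAlgebra.ι R (Sum.inl j) * FreeAlgebra.ι R (Sum.inl i)))

/-- The quantum torus `T(Q)`. -/
def QuantumTorus (R : Type) [CommRing R] (sqq : Rˣ) {r : ℕ}
    (Q : Matrix (Fin r) (Fin r) ℤ) : Type :=
  RingQuot (QTRel R sqq Q)

noncomputable instance (R : Type) [CommRing R] (sqq : Rˣ) {r : ℕ}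
    (Q : Matrix (Fin r) (Fin r) ℤ) : Ring (QuantumTorus R sqq Q) :=
  inferInstanceAs (Ring (RingQuot (QTRel R sqq Q)))

noncomputable instance (R : Type) [CommRing R] (sqq : Rˣ) {r : ℕ}
    (Q : Matrix (Fin r) (Fin r) ℤ) : Algebra R (QuantumTorus R sqq Q) :=
  inferInstanceAs (Algebra R (RingQuot (QTRel R sqq Q)))

namespace QuantumTorus

variable {R : Type} [CommRing R] (sqq : Rˣ) {r : ℕ} (Q : Matrix (Fin r) (Fin r) ℤ)

/-- The generator `x_i` of the quantum torus. -/
noncomputable def X (i : Fin r) : QuantumTorus R sqq Q :=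
  RingQuot.mkAlgHom R (QTRel R sqq Q) (FreeAlgebra.ι R (Sum.inl i))

/-- The inverse generator `x_i⁻¹` of the quantum torus. -/
noncomputable def Xinv (i : Fin r) : QuantumTorus R sqq Q :=
  RingQuot.mkAlgHom R (QTRel R sqq Q) (FreeAlgebra.ι R (Sum.inr i))

/-- `x_i^k` for `k : ℤ`, using the inverse generator for negative powers. -/
noncomputable def genPow (i : Fin r) (k : ℤ) : QuantumTorus R sqq Q :=
  if 0 ≤ k then X sqq Q i ^ k.toNat else Xinv sqq Q i ^ (-k).toNat

end QuantumTorus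

/-- The pairing `⟨k,k'⟩_Q = ∑_{i,j} Q i j * k i * k' j`. -/
def quantumPairing {r : ℕ} (Q : Matrix (Fin r) (Fin r) ℤ) (k k' : Fin r → ℤ) : ℤ :=
  ∑ i, ∑ j, Q i j * k i * k' j

/-- The sum `∑_{i<j} Q i j * k i * k j` used to normalize monomials. -/
def quantumUpperSum {r : ℕ} (Q : Matrix (Fin r) (Fin r) ℤ) (k : Fin r → ℤ) : ℤ :=
  ∑ i, ∑ j, if i < j then Q i j * k i * k j else 0

/-- The normalized monomial
`x^k = q^{-(1/2) ∑_{i<j} Q i j k_i k_j} x_1^{k_1} ⋯ x_r^{k_r}`. -/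
noncomputable def QuantumTorus.monomial {R : Type} [CommRing R] (sqq : Rˣ) {r : ℕ}
    (Q : Matrix (Fin r) (Fin r) ℤ) (k : Fin r → ℤ) : QuantumTorus R sqq Q :=
  ((sqq ^ (-(quantumUpperSum Q k)) : Rˣ) : R) •
    ((List.finRange r).map (fun i => QuantumTorus.genPow sqq Q i (k i))).prod

/-!
In the unit group of `T(M)` the normalized monomials multiply as `x^a x^b = q^{⟨a,b⟩/2} x^{a+b}`
with `⟨a,b⟩ = a M bᵀ`: commuting the factors of `x^b` past those of `x^a` one generator at a
time only produces central powers of `q^{1/2}`, and antisymmetry of `M` turns their total,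
together with the normalizations, into `⟨a,b⟩`. Since `H Q' Hᵀ = Q` gives
`⟨aH,bH⟩_{Q'} = ⟨a,b⟩_Q`, the monomials `x^{h_i}` of the rows of `H` satisfy the defining
relations of `T(Q)`, so `x_i ↦ x^{h_i}` defines an algebra map `f`. Then `k ↦ f(x^k)` and
`k ↦ x^{kH}` obey the same multiplication rule and agree on the multiples of basis vectors,
hence everywhere.
-/

theorem Finset.sum_sum_eq_sum_sum_ite_lt_add_sum {ι M : Type*} [Fintype ι] [LinearOrder ι]
    [AddCommMonoid M] (f : ι → ι → M) :
    ∑ i, ∑ j, f i j = ∑ i, ∑ j, (if i < j then f i j + f j i else 0) + ∑ i, f i i := by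
  have hsplit : ∀ i j, f i j = (if i < j then f i j else 0) + (if j < i then f i j else 0) +
      (if i = j then f i j else 0) := by
    intro i j
    rcases lt_trichotomy i j with h | rfl | h
    · simp [h, h.not_gt, h.ne]
    · simp
    · simp [h, h.not_gt, h.ne']
  have hswap :
      ∑ i, ∑ j, (if j < i then f i j else 0) = ∑ i, ∑ j, if i < j then f j i else 0 :=
    Finset.sum_comm
  simp_rw [Finset.sum_congr rfl fun i _ => Finset.sum_congr rfl fun j _ => hsplit i j,
    Finset.sum_add_distrib, hswap, Finset.sum_ite_eq, Finset.mem_univ, if_true,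
    ← Finset.sum_add_distrib, ← ite_add_zero]

theorem Fin.sum_sum_ite_lt_succ {M : Type*} [AddCommMonoid M] {n : ℕ}
    (φ : Fin (n + 1) → Fin (n + 1) → M) :
    ∑ i, ∑ j, (if i < j then φ i j else 0) =
      ∑ j : Fin n, φ 0 j.succ +
        ∑ i : Fin n, ∑ j : Fin n, if i < j then φ i.succ j.succ else 0 := by
  simp [Fin.sum_univ_succ, Fin.succ_pos, Fin.succ_lt_succ_iff]

section CentralCommutators

variable {G : Type*} [Group G] {s : G}

theorem mul_zpow_eq_of_mul_eq (hs : ∀ g, Commute s g) {u v : G} {c : ℤ}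
    (h : u * v = s ^ c * (v * u)) (b : ℤ) : u * v ^ b = s ^ (c * b) * (v ^ b * u) := by
  have hconj : SemiconjBy u v (s ^ c * v) := by rw [SemiconjBy, h, mul_assoc]
  rw [(hconj.zpow_right b).eq, ((hs v).zpow_left c).mul_zpow, ← zpow_mul, mul_assoc]

theorem zpow_mul_eq_of_mul_eq (hs : ∀ g, Commute s g) {u v : G} {c : ℤ}
    (h : u * v = s ^ c * (v * u)) (a : ℤ) : u ^ a * v = s ^ (c * a) * (v * u ^ a) := by
  have h' : v * u = s ^ (-c) * (u * v) := by
    rw [h, ← mul_assoc, ← zpow_add, neg_add_cancel, zpow_zero, one_mul]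
  rw [mul_zpow_eq_of_mul_eq hs h' a, ← mul_assoc, ← zpow_add, neg_mul, add_neg_cancel,
    zpow_zero, one_mul]

theorem mul_left_comm_zpow (hs : ∀ g, Commute s g) (e : ℤ) (g y : G) :
    g * (s ^ e * y) = s ^ e * (g * y) :=
  (((hs g).zpow_left e).left_comm y).symm

def orderedZPowProd {n : ℕ} (u : Fin n → G) (a : Fin n → ℤ) : G :=
  (List.ofFn fun i => u i ^ a i).prod

@[simp]
theorem orderedZPowProd_zero (u : Fin 0 → G) (a : Fin 0 → ℤ) : orderedZPowProd u a = 1 := rfl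

theorem orderedZPowProd_succ {n : ℕ} (u : Fin (n + 1) → G) (a : Fin (n + 1) → ℤ) :
    orderedZPowProd u a = u 0 ^ a 0 * orderedZPowProd (Fin.tail u) (Fin.tail a) := by
  simp [orderedZPowProd, List.ofFn_succ, Fin.tail]

theorem orderedZPowProd_single {n : ℕ} (u : Fin n → G) (i : Fin n) (m : ℤ) :
    orderedZPowProd u (Pi.single i m) = u i ^ m := by
  rw [orderedZPowProd, List.ofFn_eq_map, List.prod_map_eq_pow_single i _ fun j hj _ => by simp [hj],
    List.count_finRange, pow_one, Pi.single_eq_same]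

theorem orderedZPowProd_mul_eq_of_mul_eq (hs : ∀ g, Commute s g) {n : ℕ} (u : Fin n → G)
    {x : G} {c : Fin n → ℤ} (hx : ∀ j, u j * x = s ^ c j * (x * u j)) (a : Fin n → ℤ) :
    orderedZPowProd u a * x = s ^ (∑ j, c j * a j) * (x * orderedZPowProd u a) := by
  induction n with
  | zero => simp
  | succ n ih =>
    set P := orderedZPowProd (Fin.tail u) (Fin.tail a)
    calc orderedZPowProd u a * x = u 0 ^ a 0 * (P * x) := by rw [orderedZPowProd_succ, mul_assoc]
      _ = s ^ (∑ j : Fin n, c j.succ * a j.succ) * ((u 0 ^ a 0 * x) * P) := by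
        rw [ih (Fin.tail u) (fun j => hx j.succ), mul_left_comm_zpow hs, mul_assoc]; rfl
      _ = s ^ (∑ j : Fin n, c j.succ * a j.succ) * (s ^ (c 0 * a 0) * (x * u 0 ^ a 0) * P) := by
        rw [zpow_mul_eq_of_mul_eq hs (hx 0)]
      _ = s ^ (∑ j, c j * a j) * (x * orderedZPowProd u a) := by
        rw [orderedZPowProd_succ, Fin.sum_univ_succ, add_comm (c 0 * a 0), zpow_add]
        simp only [mul_assoc]; rfl

theorem orderedZPowProd_mul_orderedZPowProd (hs : ∀ g, Commute s g) {n : ℕ} (u : Fin n → G)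
    {B : Fin n → Fin n → ℤ} (hu : ∀ i j, u i * u j = s ^ B i j * (u j * u i))
    (a b : Fin n → ℤ) :
    orderedZPowProd u a * orderedZPowProd u b =
      s ^ (∑ i, ∑ j, if i < j then B j i * a j * b i else 0) * orderedZPowProd u (a + b) := by
  induction n with
  | zero => simp
  | succ n ih =>
    set Pa := orderedZPowProd (Fin.tail u) (Fin.tail a)
    set Pb := orderedZPowProd (Fin.tail u) (Fin.tail b)
    set E := ∑ j : Fin n, B j.succ 0 * b 0 * a j.succ
    set F :=
      ∑ i : Fin n, ∑ j : Fin n, if i < j then B j.succ i.succ * a j.succ * b i.succ else 0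
    have hmove : Pa * u 0 ^ b 0 = s ^ E * (u 0 ^ b 0 * Pa) :=
      orderedZPowProd_mul_eq_of_mul_eq hs (Fin.tail u)
        (fun j => mul_zpow_eq_of_mul_eq hs (hu j.succ 0) (b 0)) (Fin.tail a)
    calc orderedZPowProd u a * orderedZPowProd u b = u 0 ^ a 0 * ((Pa * u 0 ^ b 0) * Pb) := by
          rw [orderedZPowProd_succ u a, orderedZPowProd_succ u b]; simp only [mul_assoc]; rfl
      _ = s ^ E * (u 0 ^ (a 0 + b 0) * (Pa * Pb)) := by
          rw [hmove, mul_assoc, mul_left_comm_zpow hs, mul_assoc, ← mul_assoc (u 0 ^ a 0),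
            ← zpow_add]
      _ = s ^ (E + F) * (u 0 ^ (a 0 + b 0) * orderedZPowProd (Fin.tail u) (Fin.tail (a + b))) := by
          rw [ih (Fin.tail u) (fun i j => hu i.succ j.succ), mul_left_comm_zpow hs, ← mul_assoc,
            ← zpow_add]; rfl
      _ = _ := by
          rw [orderedZPowProd_succ u (a + b), Fin.sum_sum_ite_lt_succ]
          congr 3
          exact Finset.sum_congr rfl fun j _ => by ring

theorem cocycle_ext {ι : Type*} [Finite ι] [DecidableEq ι] {w w' : (ι → ℤ) → G}
    {c : (ι → ℤ) → (ι → ℤ) → G} (hw : ∀ a b, w a * w b = c a b * w (a + b))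
    (hw' : ∀ a b, w' a * w' b = c a b * w' (a + b)) (h0 : w 0 = w' 0)
    (hsingle : ∀ i m, w (Pi.single i m) = w' (Pi.single i m)) : w = w' := by
  funext k
  induction k using Pi.single_induction with
  | zero => exact h0
  | add a b ha hb => exact mul_left_cancel ((hw a b).symm.trans (ha ▸ hb ▸ hw' a b))
  | single i m => exact hsingle i m

end CentralCommutators

theorem apply_eq_neg_of_transpose_eq_neg {m α : Type*} [Neg α] {M : Matrix m m α}
    (hM : Mᵀ = -M) (i j : m) : M j i = -M i j := by
  simpa using congrFun (congrFun hM i) j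

section Pairing

variable {n : ℕ}

theorem quantumPairing_eq_vecMul_dotProduct (M : Matrix (Fin n) (Fin n) ℤ) (a b : Fin n → ℤ) :
    quantumPairing M a b = a ᵥ* M ⬝ᵥ b := by
  simp only [quantumPairing, Matrix.vecMul, dotProduct, Finset.sum_mul]
  rw [Finset.sum_comm]
  simp only [mul_comm (a _)]

theorem quantumPairing_vecMul_vecMul {m : ℕ} (M : Matrix (Fin m) (Fin m) ℤ)
    (H : Matrix (Fin n) (Fin m) ℤ) (a b : Fin n → ℤ) :
    quantumPairing M (a ᵥ* H) (b ᵥ* H) = quantumPairing (H * M * Hᵀ) a b := by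
  rw [quantumPairing_eq_vecMul_dotProduct, quantumPairing_eq_vecMul_dotProduct,
    ← Matrix.mulVec_transpose H b, Matrix.dotProduct_mulVec, Matrix.vecMul_vecMul,
    Matrix.vecMul_vecMul, Matrix.mul_assoc]

theorem quantumPairing_single_single (M : Matrix (Fin n) (Fin n) ℤ) (i j : Fin n) :
    quantumPairing M (Pi.single i 1) (Pi.single j 1) = M i j := by
  simp [quantumPairing_eq_vecMul_dotProduct]

theorem quantumPairing_smul_left (M : Matrix (Fin n) (Fin n) ℤ) (c : ℤ) (a b : Fin n → ℤ) :
    quantumPairing M (c • a) b = c * quantumPairing M a b := by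
  rw [quantumPairing_eq_vecMul_dotProduct, quantumPairing_eq_vecMul_dotProduct,
    Matrix.smul_vecMul, smul_dotProduct, smul_eq_mul]

theorem quantumPairing_swap {M : Matrix (Fin n) (Fin n) ℤ} (hM : Mᵀ = -M)
    (a b : Fin n → ℤ) :
    quantumPairing M b a = -quantumPairing M a b := by
  rw [quantumPairing_eq_vecMul_dotProduct, ← Matrix.dotProduct_mulVec,
    ← Matrix.vecMul_transpose, hM, Matrix.vecMul_neg, dotProduct_neg, dotProduct_comm,
    quantumPairing_eq_vecMul_dotProduct]

theorem quantumPairing_self {M : Matrix (Fin n) (Fin n) ℤ} (hM : Mᵀ = -M) (a : Fin n → ℤ) :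
    quantumPairing M a a = 0 := by
  have := quantumPairing_swap hM a a
  omega

theorem quantumPairing_eq_sum_ite_lt {M : Matrix (Fin n) (Fin n) ℤ} (hM : Mᵀ = -M)
    (a b : Fin n → ℤ) :
    quantumPairing M a b = ∑ i, ∑ j, if i < j then M i j * (a i * b j - a j * b i) else 0 := by
  have hanti := apply_eq_neg_of_transpose_eq_neg hM
  have hdiag : ∀ i, M i i = 0 := fun i => by linarith [hanti i i]
  rw [quantumPairing, Finset.sum_sum_eq_sum_sum_ite_lt_add_sum]
  simp only [hdiag, zero_mul, Finset.sum_const_zero, add_zero]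
  refine Finset.sum_congr rfl fun i _ => Finset.sum_congr rfl fun j _ => ?_
  split_ifs
  · rw [hanti i j]; ring
  · rfl

theorem quantumPairing_add_neg_quantumUpperSum {M : Matrix (Fin n) (Fin n) ℤ} (hM : Mᵀ = -M)
    (a b : Fin n → ℤ) :
    quantumPairing M a b + -quantumUpperSum M (a + b) =
      -quantumUpperSum M a + -quantumUpperSum M b +
        ∑ i, ∑ j, if i < j then 2 * M j i * a j * b i else 0 := by
  simp only [quantumPairing_eq_sum_ite_lt hM, quantumUpperSum, ← Finset.sum_neg_distrib,
    ← Finset.sum_add_distrib]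
  refine Finset.sum_congr rfl fun i _ => Finset.sum_congr rfl fun j _ => ?_
  split_ifs
  · rw [apply_eq_neg_of_transpose_eq_neg hM i j, Pi.add_apply, Pi.add_apply]; ring
  · simp

end Pairing

namespace QuantumTorus

variable {R : Type} [CommRing R] (sqq : Rˣ) {n : ℕ} (M : Matrix (Fin n) (Fin n) ℤ)

noncomputable def sqrtQUnit : (QuantumTorus R sqq M)ˣ :=
  Units.map (algebraMap R (QuantumTorus R sqq M) : R →* QuantumTorus R sqq M) sqq

theorem sqrtQUnit_commute (g : (QuantumTorus R sqq M)ˣ) : Commute (sqrtQUnit sqq M) g :=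
  Units.ext (Algebra.commutes _ _)

theorem zpow_smul_eq_sqrtQUnit_zpow_mul (c : ℤ) (x : QuantumTorus R sqq M) :
    ((sqq ^ c : Rˣ) : R) • x = ((sqrtQUnit sqq M ^ c : (QuantumTorus R sqq M)ˣ) : _) * x := by
  rw [Algebra.smul_def, sqrtQUnit, ← map_zpow]; rfl

theorem X_mul_Xinv (i : Fin n) : X sqq M i * Xinv sqq M i = 1 :=
  (map_mul _ _ _).symm.trans <| (RingQuot.mkAlgHom_rel R (QTRel.mul_inv i)).trans (map_one _)

theorem Xinv_mul_X (i : Fin n) : Xinv sqq M i * X sqq M i = 1 :=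
  (map_mul _ _ _).symm.trans <| (RingQuot.mkAlgHom_rel R (QTRel.inv_mul i)).trans (map_one _)

theorem X_mul_X (i j : Fin n) :
    X sqq M i * X sqq M j = ((sqq ^ (2 * M i j) : Rˣ) : R) • (X sqq M j * X sqq M i) :=
  (map_mul _ _ _).symm.trans <| (RingQuot.mkAlgHom_rel R (QTRel.qcomm i j)).trans <|
    (map_smul _ _ _).trans (congrArg _ (map_mul _ _ _))

noncomputable def genUnit (i : Fin n) : (QuantumTorus R sqq M)ˣ :=
  ⟨X sqq M i, Xinv sqq M i, X_mul_Xinv sqq M i, Xinv_mul_X sqq M i⟩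

theorem genUnit_mul_genUnit (i j : Fin n) :
    genUnit sqq M i * genUnit sqq M j =
      sqrtQUnit sqq M ^ (2 * M i j) * (genUnit sqq M j * genUnit sqq M i) :=
  Units.ext <| (X_mul_X sqq M i j).trans (zpow_smul_eq_sqrtQUnit_zpow_mul sqq M _ _)

theorem genPow_eq_genUnit_zpow (i : Fin n) (k : ℤ) :
    genPow sqq M i k = ((genUnit sqq M i ^ k : (QuantumTorus R sqq M)ˣ) : _) := by
  rw [genPow]
  split_ifs with hk
  · lift k to ℕ using hk
    rfl
  · obtain ⟨m, rfl⟩ : ∃ m : ℕ, k = -m := ⟨(-k).toNat, by omega⟩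
    rw [neg_neg, Int.toNat_natCast, zpow_neg, zpow_natCast, ← inv_pow, Units.val_pow_eq_pow_val]
    rfl

noncomputable def monomialUnit (k : Fin n → ℤ) : (QuantumTorus R sqq M)ˣ :=
  sqrtQUnit sqq M ^ (-quantumUpperSum M k) * orderedZPowProd (genUnit sqq M) k

theorem val_monomialUnit (k : Fin n → ℤ) :
    (monomialUnit sqq M k : QuantumTorus R sqq M) = monomial sqq M k := by
  rw [monomial, zpow_smul_eq_sqrtQUnit_zpow_mul, monomialUnit, Units.val_mul, orderedZPowProd,
    List.ofFn_eq_map]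
  simp only [genPow_eq_genUnit_zpow]
  congr 1
  rw [← Units.coeHom_apply, map_list_prod, List.map_map]
  rfl

variable {M}

theorem monomialUnit_mul (hM : Mᵀ = -M) (a b : Fin n → ℤ) :
    monomialUnit sqq M a * monomialUnit sqq M b =
      sqrtQUnit sqq M ^ quantumPairing M a b * monomialUnit sqq M (a + b) := by
  have hs := sqrtQUnit_commute sqq M
  calc monomialUnit sqq M a * monomialUnit sqq M b
      = sqrtQUnit sqq M ^ (-quantumUpperSum M a + -quantumUpperSum M b) *
          (orderedZPowProd (genUnit sqq M) a * orderedZPowProd (genUnit sqq M) b) := by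
        rw [monomialUnit, monomialUnit, mul_assoc, mul_left_comm_zpow hs, ← mul_assoc,
          ← mul_assoc, ← zpow_add, mul_assoc]
    _ = sqrtQUnit sqq M ^ (quantumPairing M a b + -quantumUpperSum M (a + b)) *
          orderedZPowProd (genUnit sqq M) (a + b) := by
        rw [orderedZPowProd_mul_orderedZPowProd hs _ (genUnit_mul_genUnit sqq M), ← mul_assoc,
          ← zpow_add, quantumPairing_add_neg_quantumUpperSum hM]
    _ = _ := by rw [zpow_add, mul_assoc, monomialUnit]

theorem monomialUnit_mul_comm (hM : Mᵀ = -M) (a b : Fin n → ℤ) :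
    monomialUnit sqq M a * monomialUnit sqq M b =
      sqrtQUnit sqq M ^ (2 * quantumPairing M a b) *
        (monomialUnit sqq M b * monomialUnit sqq M a) := by
  rw [monomialUnit_mul sqq hM b a, add_comm b a, monomialUnit_mul sqq hM a b, ← mul_assoc,
    ← zpow_add, quantumPairing_swap hM a b, two_mul, add_neg_cancel_right]

theorem monomialUnit_zero : monomialUnit sqq M 0 = 1 := by
  simp [monomialUnit, quantumUpperSum, orderedZPowProd]

theorem monomialUnit_single (i : Fin n) (m : ℤ) :
    monomialUnit sqq M (Pi.single i m) = genUnit sqq M i ^ m := by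
  have hupper : quantumUpperSum M (Pi.single i m) = 0 := by
    refine Finset.sum_eq_zero fun j _ => Finset.sum_eq_zero fun l _ => ?_
    split_ifs with hjl
    · rcases eq_or_ne j i with rfl | hj
      · simp [Pi.single_eq_of_ne hjl.ne']
      · simp [Pi.single_eq_of_ne hj]
    · rfl
  rw [monomialUnit, hupper, neg_zero, zpow_zero, one_mul, orderedZPowProd_single]

theorem monomialUnit_zsmul (hM : Mᵀ = -M) (h : Fin n → ℤ) (c : ℤ) :
    monomialUnit sqq M (c • h) = monomialUnit sqq M h ^ c := by
  have hstep : ∀ d : ℤ, monomialUnit sqq M (d • h) * monomialUnit sqq M h =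
      monomialUnit sqq M ((d + 1) • h) := fun d => by
    rw [monomialUnit_mul sqq hM, quantumPairing_smul_left, quantumPairing_self hM, mul_zero,
      zpow_zero, one_mul, add_smul, one_smul]
  induction c using Int.induction_on with
  | zero => rw [zero_smul, zpow_zero, monomialUnit_zero]
  | succ d ih => rw [← hstep, ih, zpow_add_one]
  | pred d ih =>
    rw [zpow_sub_one, ← ih, eq_mul_inv_iff_mul_eq, hstep, sub_add_cancel]

section Lift

variable {A : Type*} [Ring A] [Algebra R A] (v : Fin n → Aˣ)
  (hv : ∀ i j, (v i * v j : A) = ((sqq ^ (2 * M i j) : Rˣ) : R) • (v j * v i : A))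

noncomputable def lift : QuantumTorus R sqq M →ₐ[R] A :=
  RingQuot.liftAlgHom R ⟨FreeAlgebra.lift R (Sum.elim (fun i => v i) fun i => ↑(v i)⁻¹), by
    rintro _ _ (i | i | ⟨i, j⟩)
    · simp
    · simp
    · simp only [map_mul, map_smul, FreeAlgebra.lift_ι_apply, Sum.elim_inl]
      exact hv i j⟩

theorem lift_X (i : Fin n) : lift sqq v hv (X sqq M i) = v i :=
  (RingQuot.liftAlgHom_mkAlgHom_apply _ _ _ _).trans (FreeAlgebra.lift_ι_apply _ _)

end Lift

end QuantumTorus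

namespace QuantumTorus

variable {R : Type} [CommRing R] (sqq : Rˣ) {r r' : ℕ}

theorem map_sqrtQUnit {M : Matrix (Fin r) (Fin r) ℤ} {M' : Matrix (Fin r') (Fin r') ℤ}
    (f : QuantumTorus R sqq M →ₐ[R] QuantumTorus R sqq M') :
    Units.map (f : QuantumTorus R sqq M →* QuantumTorus R sqq M') (sqrtQUnit sqq M) =
      sqrtQUnit sqq M' :=
  Units.ext (f.commutes _)

theorem map_monomial_of_map_X {Q : Matrix (Fin r) (Fin r) ℤ} {Q' : Matrix (Fin r') (Fin r') ℤ}
    (hQ : Qᵀ = -Q) (hQ' : Q'ᵀ = -Q') {H : Matrix (Fin r) (Fin r') ℤ} (hH : H * Q' * Hᵀ = Q)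
    (f : QuantumTorus R sqq Q →ₐ[R] QuantumTorus R sqq Q')
    (hf : ∀ i, f (X sqq Q i) = monomial sqq Q' (H i)) (k : Fin r → ℤ) :
    f (monomial sqq Q k) = monomial sqq Q' (k ᵥ* H) := by
  set F := Units.map (f : QuantumTorus R sqq Q →* QuantumTorus R sqq Q')
  have hgen : ∀ i, F (genUnit sqq Q i) = monomialUnit sqq Q' (H i) := fun i =>
    Units.ext ((hf i).trans (val_monomialUnit sqq Q' _).symm)
  have key : F ∘ monomialUnit sqq Q = fun k => monomialUnit sqq Q' (k ᵥ* H) := by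
    refine cocycle_ext (c := fun a b => sqrtQUnit sqq Q' ^ quantumPairing Q a b)
      (fun a b => ?_) (fun a b => ?_) ?_ (fun i m => ?_)
    · rw [Function.comp_apply, Function.comp_apply, ← map_mul, monomialUnit_mul sqq hQ, map_mul,
        map_zpow, map_sqrtQUnit]
      rfl
    · rw [monomialUnit_mul sqq hQ', quantumPairing_vecMul_vecMul, hH, Matrix.add_vecMul]
    · simp [monomialUnit_zero]
    · rw [Function.comp_apply, monomialUnit_single, map_zpow, hgen,
        ← monomialUnit_zsmul sqq hQ', Matrix.single_vecMul]
      rfl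
  rw [← val_monomialUnit, ← val_monomialUnit]
  exact congrArg Units.val (congrFun key k)

end QuantumTorus

/-- If `H Q' Hᵀ = Q`, then the `R`-linear map `T(Q) → T(Q')` defined on
the basis of normalized monomials by `x^k ↦ x^{kH}` is an `R`-algebra homomorphism
(a multiplicatively linear homomorphism). -/
theorem quantumTorus_multiplicatively_linear (R : Type) [CommRing R] (sqq : Rˣ)
    {r r' : ℕ} (Q : Matrix (Fin r) (Fin r) ℤ) (Q' : Matrix (Fin r') (Fin r') ℤ)
    (hQ : Qᵀ = -Q) (hQ' : Q'ᵀ = -Q') (H : Matrix (Fin r) (Fin r') ℤ)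
    (hH : H * Q' * Hᵀ = Q) :
    ∃ f : QuantumTorus R sqq Q →ₐ[R] QuantumTorus R sqq Q',
      ∀ k : Fin r → ℤ,
        f (QuantumTorus.monomial sqq Q k) =
          QuantumTorus.monomial sqq Q' (Matrix.vecMul k H) := by
  open QuantumTorus in
  have hrows : ∀ i j, quantumPairing Q' (H i) (H j) = Q i j := fun i j => by
    have := quantumPairing_vecMul_vecMul Q' H (Pi.single i 1) (Pi.single j 1)
    rwa [Matrix.single_vecMul, Matrix.single_vecMul, one_smul, one_smul, hH,
      quantumPairing_single_single] at this
  have hcomm : ∀ i j,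
      (monomialUnit sqq Q' (H i) * monomialUnit sqq Q' (H j) : QuantumTorus R sqq Q') =
        ((sqq ^ (2 * Q i j) : Rˣ) : R) • (monomialUnit sqq Q' (H j) * monomialUnit sqq Q' (H i) :
          QuantumTorus R sqq Q') := fun i j => by
    simp only [zpow_smul_eq_sqrtQUnit_zpow_mul, ← Units.val_mul]
    rw [monomialUnit_mul_comm sqq hQ', hrows]
  refine ⟨lift sqq _ hcomm, map_monomial_of_map_X sqq hQ hQ' hH _ fun i => ?_⟩
  rw [lift_X, val_monomialUnit]
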